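/- Assume λθ > Nμ. The derivative of Δ_cr(δ) satisfies dΔ_cr/dδ(0) = 1 and dΔ_cr/dδ(δ) → -∞ as δ → (N/(λθ))⁻; consequently there exists δ_max ∈ (0, N/(λθ)) at which Δ_cr attains its maximum on [0, N/(λθ)), characterized by sqrt(N² - δ_max²λ²θ²)/(1+δ_max μ) = (δ_max λ²θ²/sqrt(λ²θ² - N²μ²)) · arccos(-(δ_max λ²θ² + N²μ)/(Nλθ(1+δ_max μ))). -/

import Mathlib

/-!
With `b = λθ`, the argument `x(δ)` of the arccos satisfies
`(N b (1 + δμ))² (1 - x(δ)²) = (N² - δ²b²)(b² - N²μ²)`, so `√(1 - x²)` factors through the two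
square roots in `Δ_cr` and the derivative collapses to
`1/(1 + δμ) - δ b² arccos x(δ) / (√(b² - N²μ²) √(N² - δ²b²))`.
At `δ = 0` this is `1`. As `δ → N/b` from the left, `x(δ) → -1`, so the arccos tends to `π` while
`√(N² - δ²b²) → 0⁺`, and the derivative tends to `-∞`. On `[0, N/b]` the function `Δ_cr` is
continuous, positive and increasing at `0`, and zero at `N/b`, so it attains its maximum at an
interior point; there the derivative vanishes, which after multiplying by
`√(N² - δ²b²)` is the stated equation.
-/

open Real Set Filter Topology

noncomputable def Dcr (lam mu th : ℝ) (N : ℕ) (d : ℝ) : ℝ :=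
  Real.arccos (-(d * lam^2 * th^2 + (N : ℝ)^2 * mu) / ((N : ℝ) * lam * th * (1 + d * mu))) *
    Real.sqrt (((N : ℝ)^2 - d^2 * lam^2 * th^2) / (lam^2 * th^2 - (N : ℝ)^2 * mu^2))

lemma exists_mem_Ioo_lt_of_hasDerivAt_pos {f : ℝ → ℝ} {f' a b : ℝ} (hab : a < b)
    (hf : HasDerivAt f f' a) (hf' : 0 < f') : ∃ y ∈ Ioo a b, f a < f y := by
  have hslope : ∀ᶠ t in 𝓝[>] 0, 0 < t⁻¹ • (f (a + t) - f a) :=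
    hf.tendsto_slope_zero_right.eventually (eventually_gt_nhds hf')
  obtain ⟨t, hpos, ht⟩ := (hslope.and (Ioo_mem_nhdsGT (sub_pos.2 hab))).exists
  refine ⟨a + t, ⟨by linarith [ht.1], by linarith [ht.2]⟩, ?_⟩
  rw [smul_eq_mul, mul_pos_iff_of_pos_left (inv_pos.2 ht.1)] at hpos
  linarith

lemma exists_mem_Ioo_isMaxOn_Icc {f : ℝ → ℝ} {f' a b : ℝ} (hab : a < b)
    (hf : ContinuousOn f (Icc a b)) (hfa : HasDerivAt f f' a) (hf' : 0 < f') (hfb : f b < f a) :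
    ∃ c ∈ Ioo a b, IsMaxOn f (Icc a b) c := by
  obtain ⟨c, hc, hmax⟩ := isCompact_Icc.exists_isMaxOn (nonempty_Icc.2 hab.le) hf
  refine ⟨c, ⟨hc.1.lt_of_ne ?_, hc.2.lt_of_ne ?_⟩, hmax⟩
  · rintro rfl
    obtain ⟨y, hy, hlt⟩ := exists_mem_Ioo_lt_of_hasDerivAt_pos hab hfa hf'
    exact (hmax (Ioo_subset_Icc_self hy)).not_gt hlt
  · rintro rfl
    exact (hmax (left_mem_Icc.2 hab.le)).not_gt hfb

namespace Dcr

noncomputable def cosArg (lam mu th : ℝ) (N : ℕ) (d : ℝ) : ℝ :=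
  -(d * lam^2 * th^2 + (N : ℝ)^2 * mu) / ((N : ℝ) * lam * th * (1 + d * mu))

variable {lam mu th : ℝ} {N : ℕ} {d : ℝ}

lemma one_sub_cosArg_sq (hv : (N : ℝ) * lam * th * (1 + d * mu) ≠ 0) :
    1 - cosArg lam mu th N d ^ 2 = ((N : ℝ)^2 - d^2 * lam^2 * th^2) *
      (lam^2 * th^2 - (N : ℝ)^2 * mu^2) / ((N : ℝ) * lam * th * (1 + d * mu))^2 := by
  rw [cosArg, div_pow, eq_div_iff (pow_ne_zero 2 hv), sub_mul, div_mul_cancel₀ _ (pow_ne_zero 2 hv)]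
  ring

lemma cosArg_mem_Ioo (hv : 0 < (N : ℝ) * lam * th * (1 + d * mu))
    (hh : 0 < (N : ℝ)^2 - d^2 * lam^2 * th^2) (hK : 0 < lam^2 * th^2 - (N : ℝ)^2 * mu^2) :
    cosArg lam mu th N d ∈ Ioo (-1) 1 := by
  have hsq : cosArg lam mu th N d ^ 2 < 1 := by
    have := one_sub_cosArg_sq hv.ne'
    have : 0 < ((N : ℝ)^2 - d^2 * lam^2 * th^2) *
      (lam^2 * th^2 - (N : ℝ)^2 * mu^2) / ((N : ℝ) * lam * th * (1 + d * mu))^2 := by positivity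
    linarith
  exact abs_lt.mp ((sq_lt_one_iff_abs_lt_one _).mp hsq)

lemma sqrt_one_sub_cosArg_sq (hv : 0 < (N : ℝ) * lam * th * (1 + d * mu))
    (hh : 0 ≤ (N : ℝ)^2 - d^2 * lam^2 * th^2) :
    √(1 - cosArg lam mu th N d ^ 2) = √((N : ℝ)^2 - d^2 * lam^2 * th^2) *
      √(lam^2 * th^2 - (N : ℝ)^2 * mu^2) / ((N : ℝ) * lam * th * (1 + d * mu)) := by
  rw [one_sub_cosArg_sq hv.ne', sqrt_div' _ (sq_nonneg _), sqrt_mul hh, sqrt_sq hv.le]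

lemma cosArg_endpoint (hN : 0 < N) (hlam : 0 < lam) (hth : 0 < th) (hmu : 0 ≤ mu) :
    cosArg lam mu th N (N / (lam * th)) = -1 := by
  have : 0 < 1 + N / (lam * th) * mu := by positivity
  rw [cosArg, div_eq_iff (by positivity)]
  field_simp

lemma radicand_pos (hb : 0 < lam * th) (hd0 : 0 ≤ d) (hd : d < N / (lam * th)) :
    0 < (N : ℝ)^2 - d^2 * lam^2 * th^2 := by
  have hlt := (lt_div_iff₀ hb).1 hd
  nlinarith [mul_pos (sub_pos.2 hlt) (by linarith [mul_nonneg hd0 hb.le] : (0 : ℝ) < N + d * (lam * th))]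

lemma radicand_endpoint (hb : lam * th ≠ 0) :
    (N : ℝ)^2 - (N / (lam * th))^2 * lam^2 * th^2 = 0 := by
  rw [mul_assoc, ← mul_pow, ← mul_pow, div_mul_cancel₀ _ hb, sub_self]

lemma hasDerivAt_cosArg (hv : (N : ℝ) * lam * th * (1 + d * mu) ≠ 0) :
    HasDerivAt (cosArg lam mu th N)
      (-(lam^2 * th^2 - (N : ℝ)^2 * mu^2) / ((N : ℝ) * lam * th * (1 + d * mu)^2)) d := by
  have hnum : HasDerivAt (fun d => -(d * lam^2 * th^2 + (N : ℝ)^2 * mu)) (-(lam^2 * th^2)) d :=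
    ((((hasDerivAt_id' d).mul_const (lam^2)).mul_const (th^2)).add_const _).neg.congr_deriv
      (by ring)
  have hden : HasDerivAt (fun d => (N : ℝ) * lam * th * (1 + d * mu)) ((N : ℝ) * lam * th * mu) d := by
    simpa using (((hasDerivAt_id d).mul_const mu).const_add 1).const_mul ((N : ℝ) * lam * th)
  obtain ⟨hc, hv'⟩ := mul_ne_zero_iff.1 hv
  refine (hnum.div hden hv).congr_deriv ?_
  field_simp
  ring

lemma hasDerivAt_arccos_cosArg (hv : 0 < (N : ℝ) * lam * th * (1 + d * mu))
    (hh : 0 < (N : ℝ)^2 - d^2 * lam^2 * th^2) (hK : 0 < lam^2 * th^2 - (N : ℝ)^2 * mu^2) :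
    HasDerivAt (fun d => arccos (cosArg lam mu th N d))
      (√(lam^2 * th^2 - (N : ℝ)^2 * mu^2) / ((1 + d * mu) * √((N : ℝ)^2 - d^2 * lam^2 * th^2))) d := by
  obtain ⟨hlo, hhi⟩ := cosArg_mem_Ioo hv hh hK
  refine ((hasDerivAt_arccos hlo.ne' hhi.ne).comp d (hasDerivAt_cosArg hv.ne')).congr_deriv ?_
  obtain ⟨hc, hv'⟩ := mul_ne_zero_iff.1 hv.ne'
  obtain ⟨hNl, hth⟩ := mul_ne_zero_iff.1 hc
  obtain ⟨hN, hlam⟩ := mul_ne_zero_iff.1 hNl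
  have hs := (sqrt_pos.2 hh).ne'
  rw [sqrt_one_sub_cosArg_sq hv hh.le]
  have hk2 := sq_sqrt hK.le
  field_simp
  rw [hk2]

lemma hasDerivAt_sqrt_radicand (hh : 0 < (N : ℝ)^2 - d^2 * lam^2 * th^2)
    (hK : 0 < lam^2 * th^2 - (N : ℝ)^2 * mu^2) :
    HasDerivAt (fun d => √(((N : ℝ)^2 - d^2 * lam^2 * th^2) / (lam^2 * th^2 - (N : ℝ)^2 * mu^2)))
      (-(d * lam^2 * th^2) / (√((N : ℝ)^2 - d^2 * lam^2 * th^2) *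
        √(lam^2 * th^2 - (N : ℝ)^2 * mu^2))) d := by
  have hq : HasDerivAt (fun d => ((N : ℝ)^2 - d^2 * lam^2 * th^2) / (lam^2 * th^2 - (N : ℝ)^2 * mu^2))
      (-(2 * d * lam^2 * th^2) / (lam^2 * th^2 - (N : ℝ)^2 * mu^2)) d := by
    refine ((((hasDerivAt_pow 2 d).mul_const (lam^2)).mul_const (th^2)).const_sub _).div_const _
      |>.congr_deriv ?_
    ring
  refine ((hasDerivAt_sqrt (div_pos hh hK).ne').comp d hq).congr_deriv ?_
  have hs := (sqrt_pos.2 hh).ne'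
  have hk2 := sq_sqrt hK.le
  rw [sqrt_div hh.le]
  field_simp
  rw [hk2]

theorem hasDerivAt (hc : 0 < (N : ℝ) * lam * th) (hK : 0 < lam^2 * th^2 - (N : ℝ)^2 * mu^2)
    (hv : 0 < 1 + d * mu) (hh : 0 < (N : ℝ)^2 - d^2 * lam^2 * th^2) :
    HasDerivAt (Dcr lam mu th N) ((1 + d * mu)⁻¹ - d * lam^2 * th^2 /
      √(lam^2 * th^2 - (N : ℝ)^2 * mu^2) * arccos (cosArg lam mu th N d) /
      √((N : ℝ)^2 - d^2 * lam^2 * th^2)) d := by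
  refine ((hasDerivAt_arccos_cosArg (mul_pos hc hv) hh hK).mul
    (hasDerivAt_sqrt_radicand hh hK)).congr_deriv ?_
  have hs := (sqrt_pos.2 hh).ne'
  have hk := (sqrt_pos.2 hK).ne'
  rw [sqrt_div hh.le]
  generalize √((N : ℝ)^2 - d^2 * lam^2 * th^2) = s at *
  generalize √(lam^2 * th^2 - (N : ℝ)^2 * mu^2) = k at *
  field_simp
  ring

theorem pos (hc : 0 < (N : ℝ) * lam * th) (hK : 0 < lam^2 * th^2 - (N : ℝ)^2 * mu^2)
    (hv : 0 < 1 + d * mu) (hh : 0 < (N : ℝ)^2 - d^2 * lam^2 * th^2) :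
    0 < Dcr lam mu th N d :=
  mul_pos (arccos_pos.2 (cosArg_mem_Ioo (mul_pos hc hv) hh hK).2) (sqrt_pos.2 (div_pos hh hK))

lemma eq_zero_at_endpoint (hb : lam * th ≠ 0) : Dcr lam mu th N (N / (lam * th)) = 0 := by
  rw [Dcr, radicand_endpoint hb, zero_div, sqrt_zero, mul_zero]

lemma continuousOn (hc : 0 < (N : ℝ) * lam * th) (hmu : 0 ≤ mu) :
    ContinuousOn (Dcr lam mu th N) (Ici 0) := by
  intro d (hd : 0 ≤ d)
  have hv : (N : ℝ) * lam * th * (1 + d * mu) ≠ 0 := by positivity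
  unfold Dcr
  exact ContinuousAt.continuousWithinAt (by fun_prop (disch := exact hv))

theorem tendsto_deriv_atBot (hN : 0 < N) (hlam : 0 < lam) (hth : 0 < th) (hmu : 0 ≤ mu)
    (hK : 0 < lam^2 * th^2 - (N : ℝ)^2 * mu^2) :
    Tendsto (deriv (Dcr lam mu th N)) (𝓝[<] (N / (lam * th))) atBot := by
  set L : ℝ := N / (lam * th)
  have hb : 0 < lam * th := mul_pos hlam hth
  have hL : 0 < L := by positivity
  have hIoo : Ioo 0 L ∈ 𝓝[<] L := Ioo_mem_nhdsLT hL
  have hderiv : deriv (Dcr lam mu th N) =ᶠ[𝓝[<] L] fun d => (1 + d * mu)⁻¹ - d * lam^2 * th^2 /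
      √(lam^2 * th^2 - (N : ℝ)^2 * mu^2) * arccos (cosArg lam mu th N d) /
      √((N : ℝ)^2 - d^2 * lam^2 * th^2) := by
    filter_upwards [hIoo] with d hd
    exact (hasDerivAt (by positivity) hK (by nlinarith [hd.1])
      (radicand_pos hb hd.1.le hd.2)).deriv
  rw [tendsto_congr' hderiv]
  have hv : 0 < 1 + L * mu := by positivity
  have hinv : Tendsto (fun d => (1 + d * mu)⁻¹) (𝓝[<] L) (𝓝 (1 + L * mu)⁻¹) :=
    (ContinuousAt.tendsto (by fun_prop (disch := exact hv.ne'))).mono_left nhdsWithin_le_nhds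
  have hnum : Tendsto (fun d => d * lam^2 * th^2 / √(lam^2 * th^2 - (N : ℝ)^2 * mu^2) *
      arccos (cosArg lam mu th N d)) (𝓝[<] L)
      (𝓝 (L * lam^2 * th^2 / √(lam^2 * th^2 - (N : ℝ)^2 * mu^2) * π)) := by
    have hc : (N : ℝ) * lam * th * (1 + L * mu) ≠ 0 := by positivity
    have hcont : ContinuousAt (fun d => d * lam^2 * th^2 / √(lam^2 * th^2 - (N : ℝ)^2 * mu^2) *
        arccos (cosArg lam mu th N d)) L := by
      unfold cosArg
      fun_prop (disch := exact hc)
    have := hcont.tendsto.mono_left (nhdsWithin_le_nhds (s := Iio L))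
    rwa [cosArg_endpoint hN hlam hth hmu, arccos_neg_one] at this
  have hsqrt : Tendsto (fun d => √((N : ℝ)^2 - d^2 * lam^2 * th^2)) (𝓝[<] L) (𝓝[>] 0) := by
    refine tendsto_nhdsWithin_iff.2 ⟨?_, ?_⟩
    · have hcont : ContinuousAt (fun d => √((N : ℝ)^2 - d^2 * lam^2 * th^2)) L := by fun_prop
      have := hcont.tendsto.mono_left (nhdsWithin_le_nhds (s := Iio L))
      rwa [radicand_endpoint hb.ne', sqrt_zero] at this
    · filter_upwards [hIoo] with d hd
      exact sqrt_pos.2 (radicand_pos hb hd.1.le hd.2)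
  have := hinv.add_atBot (tendsto_neg_atTop_atBot.comp
    ((hnum.pos_mul_atTop (by positivity) hsqrt.inv_tendsto_nhdsGT_zero)))
  simpa [sub_eq_add_neg, div_eq_mul_inv] using this

end Dcr

theorem Dcr_max_exists
    (lam mu th : ℝ) (N : ℕ) (hN : 0 < N)
    (hlam : 0 < lam) (hmu : 0 < mu) (hth : 0 < th)
    (hgt : lam * th > N * mu) :
    deriv (Dcr lam mu th N) 0 = 1
    ∧ Tendsto (deriv (Dcr lam mu th N))
        (nhdsWithin ((N : ℝ) / (lam * th)) (Set.Iio ((N : ℝ) / (lam * th)))) atBot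
    ∧ ∃ dmax ∈ Set.Ioo (0 : ℝ) ((N : ℝ) / (lam * th)),
        (∀ d ∈ Set.Ico (0 : ℝ) ((N : ℝ) / (lam * th)),
          Dcr lam mu th N d ≤ Dcr lam mu th N dmax)
        ∧ Real.sqrt ((N : ℝ)^2 - dmax^2 * lam^2 * th^2) / (1 + dmax * mu)
            = dmax * lam^2 * th^2 / Real.sqrt (lam^2 * th^2 - (N : ℝ)^2 * mu^2) *
              Real.arccos (-(dmax * lam^2 * th^2 + (N : ℝ)^2 * mu)
                / ((N : ℝ) * lam * th * (1 + dmax * mu))) := by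
  have hb : 0 < lam * th := mul_pos hlam hth
  have hc : 0 < (N : ℝ) * lam * th := by positivity
  have hK : 0 < lam^2 * th^2 - (N : ℝ)^2 * mu^2 := by
    nlinarith [mul_pos (sub_pos.2 hgt) (by positivity : 0 < lam * th + N * mu)]
  set L : ℝ := N / (lam * th)
  have hL : 0 < L := by positivity
  have hderiv (d : ℝ) (hd : d ∈ Ico 0 L) := Dcr.hasDerivAt hc hK (by nlinarith [hd.1])
    (Dcr.radicand_pos hb hd.1 hd.2)
  have hderiv0 : HasDerivAt (Dcr lam mu th N) 1 0 := by simpa using hderiv 0 ⟨le_rfl, hL⟩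
  have hpos0 : 0 < Dcr lam mu th N 0 :=
    Dcr.pos hc hK (by simp) (Dcr.radicand_pos hb le_rfl hL)
  obtain ⟨dm, hdm, hmax⟩ := exists_mem_Ioo_isMaxOn_Icc hL
    ((Dcr.continuousOn hc hmu.le).mono Icc_subset_Ici_self) hderiv0 one_pos
    (by rwa [Dcr.eq_zero_at_endpoint hb.ne'])
  have hcrit := (hmax.isLocalMax (Icc_mem_nhds hdm.1 hdm.2)).hasDerivAt_eq_zero
    (hderiv dm (Ioo_subset_Ico_self hdm))
  refine ⟨hderiv0.deriv, Dcr.tendsto_deriv_atBot hN hlam hth hmu.le hK, dm, hdm,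
    fun d hd ↦ hmax (Ico_subset_Icc_self hd), ?_⟩
  have hs := sqrt_pos.2 (Dcr.radicand_pos hb hdm.1.le hdm.2)
  have hv : 0 < 1 + dm * mu := by nlinarith [hdm.1]
  rw [sub_eq_zero, inv_eq_one_div, div_eq_div_iff hv.ne' hs.ne', one_mul] at hcrit
  rw [div_eq_iff hv.ne']
  exact hcrit
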